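/- arXiv:2601.12165 — 8 statements merged into one kernel-verified Lean document; each statement's English description precedes it below -/
import Mathlib

section
/- Let λ, α be weakly increasing tuples of length k of nonnegative integers and σ a permutation of {1,…,k}. Define (λ+α)_σ as the weakly increasing rearrangement of the tuple (λ_1 + α_{σ(1)}, …, λ_k + α_{σ(k)}). Then (λ+α)_σ ⪯ λ + α in dominance order. -/
/-!
The `k - i` entries of `ν` at positions `≥ i` are the entries `λ_j + α_{σ j}` for some `k - i`
indices `j`, so their sum splits into a sum of `k - i` entries of `λ` and one of `k - i` entries
of `α`.
Since `λ` and `α` are weakly increasing, each of these is at most the sum of the last `k - i`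
entries of the same tuple, and these two sums add up to the tail sum of `λ + α`.
-/

/-- Dominance order on tuples: all tail sums of `μ` are at most those of `lam`. -/
def DominatedBy {k : ℕ} (μ lam : Fin k → ℕ) : Prop :=
  ∀ i : Fin k, ∑ j ∈ Finset.Ici i, μ j ≤ ∑ j ∈ Finset.Ici i, lam j

namespace Finset

lemma sum_le_sum_Ici_of_card_eq {ι M : Type*} [LinearOrder ι] [LocallyFiniteOrderTop ι]
    [AddCommMonoid M] [PartialOrder M] [IsOrderedAddMonoid M] {f : ι → M} (hf : Monotone f)
    {s : Finset ι} {a : ι} (hs : #s = #(Ici a)) :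
    ∑ x ∈ s, f x ≤ ∑ x ∈ Ici a, f x := by
  classical
  set t := Ici a
  -- `f a` separates the values of `f` on `s \ t` from those on `t \ s`, and both sets have
  -- the same size.
  calc
    ∑ x ∈ s, f x ≤ ∑ x ∈ s ∩ t, f x + #(s \ t) • f a := by
      rw [← sum_inter_add_sum_sdiff s t]
      gcongr
      refine sum_le_card_nsmul _ _ _ fun x hx ↦ hf ?_
      simp only [t, mem_sdiff, mem_Ici, not_le] at hx
      exact hx.2.le
    _ = ∑ x ∈ t ∩ s, f x + #(t \ s) • f a := by rw [inter_comm, card_sdiff_comm hs]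
    _ ≤ ∑ x ∈ t, f x := by
      rw [← sum_inter_add_sum_sdiff t s]
      gcongr
      exact card_nsmul_le_sum _ _ _ fun x hx ↦ hf (mem_Ici.mp (mem_sdiff.mp hx).1)

end Finset

open Finset in
theorem sorted_perm_add_dominated_general {k : ℕ} (lam α : Fin k → ℕ) (σ : Equiv.Perm (Fin k))
    (hlam : Monotone lam) (hα : Monotone α)
    (ν : Fin k → ℕ)
    (π : Equiv.Perm (Fin k)) (hrearr : ∀ j : Fin k, ν (π j) = lam j + α (σ j)) :
    DominatedBy ν (fun j => lam j + α j) := by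
  intro i
  set s := (Ici i).map π.symm.toEmbedding
  have hs : #s = #(Ici i) := card_map _
  have hσs : #(s.map σ.toEmbedding) = #(Ici i) := (card_map _).trans hs
  calc
    ∑ j ∈ Ici i, ν j = ∑ j ∈ s, lam j + ∑ j ∈ s.map σ.toEmbedding, α j := by
      simp only [s, sum_map, ← sum_add_distrib, Equiv.coe_toEmbedding, ← hrearr,
        Equiv.apply_symm_apply]
    _ ≤ ∑ j ∈ Ici i, lam j + ∑ j ∈ Ici i, α j :=
      add_le_add (sum_le_sum_Ici_of_card_eq hlam hs) (sum_le_sum_Ici_of_card_eq hα hσs)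
    _ = ∑ j ∈ Ici i, (lam j + α j) := sum_add_distrib.symm

/-- The weakly increasing rearrangement `ν` of the tuple `(λ_j + α_{σ(j)})_j`
is dominated by the componentwise sum `λ + α`. -/
theorem sorted_perm_add_dominated {k : ℕ} (lam α : Fin k → ℕ) (σ : Equiv.Perm (Fin k))
    (hlam : Monotone lam) (hα : Monotone α)
    (ν : Fin k → ℕ) (hν : Monotone ν)
    (π : Equiv.Perm (Fin k)) (hrearr : ∀ j : Fin k, ν (π j) = lam j + α (σ j)) :
    DominatedBy ν (fun j => lam j + α j) :=
  sorted_perm_add_dominated_general lam α σ hlam hα ν π hrearr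
end

section
/- Let q ∈ ℕ, N ∈ ℕ, and b ∈ ℕ_0^N a weakly increasing tuple. Define the root partition λ^{(q)}_N(b)_j = q(j−1) + b_j for j = 1,…,N. For any partition μ of the same integer with μ ⪯ λ^{(q)}_N(b) in dominance order, define Γ_b(μ) = Σ_{j=1}^N (N + 1/2 − j)(μ_j − λ^{(q)}_N(b)_j) and Δ_b(μ) = Σ_{j=1}^N (λ^{(q)}_N(b)_j² − μ_j²). Then Γ_b(μ) ≤ Δ_b(μ). -/
/-!
Write `λ_j = q j + b_j` (indices from `0`). Termwise, `Δ_b(μ) - Γ_b(μ) = ∑ⱼ c_j d_j` with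
`d_j = λ_j - μ_j` and `c_j = λ_j + μ_j + N - 1/2 - j`. Since `q ≥ 1`, `λ_j - j` is weakly
increasing, and so is `c`. Dominance says that every tail sum of `d` is nonnegative, and the
tail sum from `0` vanishes. Abel summation then gives `∑ⱼ c_j d_j ≥ c_0 ∑ⱼ d_j = 0`.
-/

open Finset

section AbelSummation

variable {R : Type*} [Semiring R] [PartialOrder R] [IsOrderedRing R]

theorem Fin.mul_sum_Ici_le_sum_Ici_mul {n : ℕ} {c d : Fin (n + 1) → R} (hc : Monotone c)
    (hd : ∀ i, 0 ≤ ∑ j ∈ Ici i, d j) (k : Fin (n + 1)) :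
    c k * ∑ j ∈ Ici k, d j ≤ ∑ j ∈ Ici k, c j * d j := by
  induction k using Fin.reverseInduction with
  | last => rw [← Fin.top_eq_last, Ici_top, sum_singleton, sum_singleton]
  | cast i ih =>
    have hIoi : Ioi i.castSucc = Ici i.succ := by
      ext j; simp [Fin.castSucc_lt_iff_succ_le]
    rw [← add_sum_Ioi_eq_sum_Ici, ← add_sum_Ioi_eq_sum_Ici, hIoi, mul_add]
    gcongr
    calc c i.castSucc * ∑ j ∈ Ici i.succ, d j
        ≤ c i.succ * ∑ j ∈ Ici i.succ, d j :=
          mul_le_mul_of_nonneg_right (hc (Fin.castSucc_le_succ i)) (hd _)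
      _ ≤ _ := ih

theorem Fin.sum_mul_nonneg_of_monotone_of_sum_Ici_nonneg {n : ℕ} {c d : Fin n → R}
    (hc : Monotone c) (hd : ∀ i, 0 ≤ ∑ j ∈ Ici i, d j) (hsum : ∑ j, d j = 0) :
    0 ≤ ∑ j, c j * d j := by
  cases n with
  | zero => simp
  | succ n =>
    have := Fin.mul_sum_Ici_le_sum_Ici_mul hc hd ⊥
    rwa [Ici_bot, hsum, mul_zero] at this

end AbelSummation

/-- For any partition `μ` dominated by the root partition `λ^{(q)}_N(b)_j = q(j-1)+b_j`,
one has `Γ_b(μ) ≤ Δ_b(μ)`. -/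
theorem gamma_le_delta (q N : ℕ) (hq : 1 ≤ q) (b : Fin N → ℕ) (hb : Monotone b)
    (μ : Fin N → ℕ) (hμ : Monotone μ)
    (hsum : ∑ j, μ j = ∑ j : Fin N, (q * (j : ℕ) + b j))
    (hdom : DominatedBy μ (fun j => q * (j : ℕ) + b j)) :
    ∑ j : Fin N, ((N : ℝ) + 1 / 2 - ((j : ℕ) + 1)) * ((μ j : ℝ) - (q * (j : ℕ) + b j)) ≤
      ∑ j : Fin N, (((q * (j : ℕ) + b j : ℕ) : ℝ) ^ 2 - (μ j : ℝ) ^ 2) := by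
  set lam : Fin N → ℕ := fun j => q * (j : ℕ) + b j
  have hc : Monotone fun j : Fin N => (lam j : ℝ) + μ j + N - 1 / 2 - (j : ℕ) := by
    intro i j hij
    have hij' : ((i : ℕ) : ℝ) ≤ (j : ℕ) := by exact_mod_cast hij
    have hbij : (b i : ℝ) ≤ b j := by exact_mod_cast hb hij
    have hμij : (μ i : ℝ) ≤ μ j := by exact_mod_cast hμ hij
    have hq' : (1 : ℝ) ≤ q := by exact_mod_cast hq
    simp only [lam]; push_cast
    nlinarith
  have hd : ∀ i, 0 ≤ ∑ j ∈ Ici i, ((lam j : ℝ) - μ j) := fun i => by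
    rw [sum_sub_distrib, sub_nonneg]; exact_mod_cast hdom i
  have htotal : ∑ j, ((lam j : ℝ) - μ j) = 0 := by
    rw [sum_sub_distrib, sub_eq_zero]; exact_mod_cast hsum.symm
  rw [← sub_nonneg, ← sum_sub_distrib]
  refine (Fin.sum_mul_nonneg_of_monotone_of_sum_Ici_nonneg hc hd htotal).trans_eq
    (sum_congr rfl fun j _ => ?_)
  simp only [lam]; push_cast; ring
end

section
/- Let q ∈ ℕ, N ≥ 1, and b ∈ ℕ_0^N weakly increasing with root partition λ_j = q(j−1) + b_j. Suppose μ ⪯ λ^{(q)}_N(b) is irreducible, i.e. δ_s := Σ_{j=1}^s (μ_j − λ_j) ≥ 1 for all 1 ≤ s ≤ N−1 and δ_N = 0. Then Δ_b(μ) := Σ_{j=1}^N (λ_j² − μ_j²) ≥ q(N−1) + b_N − b_1. -/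
open Finset

lemma sum_Iic_fin {N : ℕ} (s : Fin N) (g : ℕ → ℕ) :
    ∑ j ∈ Finset.Iic s, g (j : ℕ) = ∑ j ∈ Finset.range ((s : ℕ) + 1), g j := by
  apply Finset.sum_nbij' (fun (a : Fin N) => (a : ℕ))
    (fun a => (⟨a % N, Nat.mod_lt _ s.pos⟩ : Fin N))
  · intro a ha
    simp only [mem_Iic] at ha
    simp [Nat.lt_succ_iff, Fin.le_iff_val_le_val.mp ha]
  · intro a ha
    simp only [mem_range, Nat.lt_succ_iff] at ha
    have hlt : a < N := lt_of_le_of_lt ha s.isLt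
    simp [Nat.mod_eq_of_lt hlt, mem_Iic, Fin.le_iff_val_le_val, ha]
  · intro a ha; ext; simp [Nat.mod_eq_of_lt a.isLt]
  · intro a ha
    simp only [mem_range, Nat.lt_succ_iff] at ha
    have hlt : a < N := lt_of_le_of_lt ha s.isLt
    simp [Nat.mod_eq_of_lt hlt]
  · intro a ha; rfl

/-- For an irreducible partition `μ` dominated by the root partition
`λ_j = q(j-1) + b_j`, one has `Δ_b(μ) ≥ q(N-1) + b_N - b_1`. -/
theorem delta_lower_bound_irreducible (q N : ℕ) (hq : 1 ≤ q) (hN : 1 ≤ N)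
    (b : Fin N → ℕ) (hb : Monotone b)
    (μ : Fin N → ℕ) (hμ : Monotone μ)
    (hsum : ∑ j, μ j = ∑ j : Fin N, (q * (j : ℕ) + b j))
    (hdom : DominatedBy μ (fun j => q * (j : ℕ) + b j))
    (hirr : ∀ s : Fin N, (s : ℕ) < N - 1 →
      (∑ j ∈ Finset.Iic s, (q * (j : ℕ) + b j)) + 1 ≤ ∑ j ∈ Finset.Iic s, μ j) :
    (q * (N - 1) : ℤ) + b ⟨N - 1, by omega⟩ - b ⟨0, by omega⟩ ≤
      ∑ j : Fin N, (((q * (j : ℕ) + b j : ℕ) : ℤ) ^ 2 - (μ j : ℤ) ^ 2) := by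
  classical
  set b' : ℕ → ℕ := fun j => b ⟨j % N, Nat.mod_lt _ hN⟩ with hb'
  set m' : ℕ → ℕ := fun j => μ ⟨j % N, Nat.mod_lt _ hN⟩ with hm'
  have hbv : ∀ j : Fin N, b' (j : ℕ) = b j := by
    intro j; simp only [hb']; congr 1; exact Fin.ext (Nat.mod_eq_of_lt j.isLt)
  have hmv : ∀ j : Fin N, m' (j : ℕ) = μ j := by
    intro j; simp only [hm']; congr 1; exact Fin.ext (Nat.mod_eq_of_lt j.isLt)
  set L : ℕ → ℤ := fun j => ((q * j + b' j : ℕ) : ℤ) with hL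
  set M : ℕ → ℤ := fun j => (m' j : ℤ) with hM
  set c : ℕ → ℤ := fun j => L j + M j with hc
  set g : ℕ → ℤ := fun j => L j - M j with hg
  have key0 : ∀ j : Fin N, ((q * (j : ℕ) + b j : ℕ) : ℤ) = L (j : ℕ) := by
    intro j; simp [hL, hbv]
  have keyM : ∀ j : Fin N, ((μ j : ℕ) : ℤ) = M (j : ℕ) := by
    intro j; simp [hM, hmv]
  -- total sum of g over range N is zero
  have htot : ∑ i ∈ range N, g i = 0 := by
    have h1 : ∑ i ∈ range N, L i = ∑ i ∈ range N, M i := by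
      have e1 : ∑ j : Fin N, ((q * (j : ℕ) + b j : ℕ) : ℤ) = ∑ i ∈ range N, L i := by
        rw [Finset.sum_range fun i => L i]; exact Finset.sum_congr rfl fun j _ => key0 j
      have e2 : ∑ j : Fin N, ((μ j : ℕ) : ℤ) = ∑ i ∈ range N, M i := by
        rw [Finset.sum_range fun i => M i]; exact Finset.sum_congr rfl fun j _ => keyM j
      rw [← e1, ← e2]
      exact_mod_cast congrArg (Nat.cast : ℕ → ℤ) hsum.symm
    simp [hg, Finset.sum_sub_distrib, h1]
  -- partial sums of g are ≤ -1 for i < N-1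
  have hdelta : ∀ i : ℕ, i < N - 1 → ∑ j ∈ range (i + 1), g j ≤ -1 := by
    intro i hi
    have hiN : i < N := by omega
    have hir := hirr ⟨i, hiN⟩ (by simpa using hi)
    have e1 : ∑ j ∈ Finset.Iic (⟨i, hiN⟩ : Fin N), (q * (j : ℕ) + b j)
        = ∑ j ∈ range (i + 1), (q * j + b' j) := by
      rw [show (∑ j ∈ Finset.Iic (⟨i, hiN⟩ : Fin N), (q * (j : ℕ) + b j))
          = ∑ j ∈ Finset.Iic (⟨i, hiN⟩ : Fin N), (fun t => q * t + b' t) (j : ℕ) from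
        Finset.sum_congr rfl fun j _ => by simp [hbv]]
      exact sum_Iic_fin (⟨i, hiN⟩ : Fin N) (fun t => q * t + b' t)
    have e2 : ∑ j ∈ Finset.Iic (⟨i, hiN⟩ : Fin N), μ j
        = ∑ j ∈ range (i + 1), m' j := by
      rw [show (∑ j ∈ Finset.Iic (⟨i, hiN⟩ : Fin N), μ j)
          = ∑ j ∈ Finset.Iic (⟨i, hiN⟩ : Fin N), (fun t => m' t) (j : ℕ) from
        Finset.sum_congr rfl fun j _ => by simp [hmv]]
      exact sum_Iic_fin (⟨i, hiN⟩ : Fin N) (fun t => m' t)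
    rw [e1, e2] at hir
    have : (∑ j ∈ range (i + 1), (q * j + b' j) : ℤ) + 1 ≤ ∑ j ∈ range (i + 1), (m' j : ℤ) := by
      exact_mod_cast hir
    have hsplit : ∑ j ∈ range (i + 1), g j
        = (∑ j ∈ range (i + 1), ((q * j + b' j : ℕ) : ℤ)) - ∑ j ∈ range (i + 1), (m' j : ℤ) := by
      simp [hg, hL, hM, Finset.sum_sub_distrib]
    rw [hsplit]
    push_cast at this ⊢
    linarith
  -- Abel summation
  have habel : ∑ i ∈ range N, c i * g i
      = - ∑ i ∈ range (N - 1), (c (i + 1) - c i) * ∑ j ∈ range (i + 1), g j := by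
    have := Finset.sum_range_by_parts c g N
    simp only [smul_eq_mul] at this
    rw [this, htot, mul_zero, zero_sub]
  -- rewrite goal sum
  have hgoal : ∑ j : Fin N, (((q * (j : ℕ) + b j : ℕ) : ℤ) ^ 2 - (μ j : ℤ) ^ 2)
      = ∑ i ∈ range N, c i * g i := by
    rw [Finset.sum_range fun i => c i * g i]
    refine Finset.sum_congr rfl fun j _ => ?_
    rw [hc, hg]
    have := key0 j; have := keyM j
    simp only [hc, hg]
    rw [← key0 j, ← keyM j]; ring
  rw [hgoal, habel]
  -- bound each term
  have hterm : ∀ i ∈ range (N - 1),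
      L (i + 1) - L i ≤ -((c (i + 1) - c i) * ∑ j ∈ range (i + 1), g j) := by
    intro i hi
    rw [mem_range] at hi
    have hd : ∑ j ∈ range (i + 1), g j ≤ -1 := hdelta i hi
    have hLd : L (i + 1) - L i ≤ c (i + 1) - c i := by
      have hMd : M i ≤ M (i + 1) := by
        have h1 : i < N := by omega
        have h2 : i + 1 < N := by omega
        simp only [hM, hm']
        exact_mod_cast hμ (show (⟨i % N, Nat.mod_lt _ hN⟩ : Fin N) ≤ ⟨(i+1) % N, Nat.mod_lt _ hN⟩ by
          simp [Fin.le_iff_val_le_val, Nat.mod_eq_of_lt h1, Nat.mod_eq_of_lt h2])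
      simp only [hc]; linarith
    have hL0 : 0 ≤ L (i + 1) - L i := by
      have h1 : i < N := by omega
      have h2 : i + 1 < N := by omega
      have hbd : b' i ≤ b' (i + 1) := by
        simp only [hb']
        exact hb (show (⟨i % N, Nat.mod_lt _ hN⟩ : Fin N) ≤ ⟨(i+1) % N, Nat.mod_lt _ hN⟩ by
          simp [Fin.le_iff_val_le_val, Nat.mod_eq_of_lt h1, Nat.mod_eq_of_lt h2])
      simp only [hL]
      push_cast
      have : (q : ℤ) * i ≤ q * (i + 1) := by
        have : (0:ℤ) ≤ q := by positivity
        nlinarith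
      have : (b' i : ℤ) ≤ b' (i + 1) := by exact_mod_cast hbd
      linarith
    have hc0 : 0 ≤ c (i + 1) - c i := le_trans hL0 hLd
    nlinarith
  calc (q * (N - 1) : ℤ) + b ⟨N - 1, by omega⟩ - b ⟨0, by omega⟩
      = ∑ i ∈ range (N - 1), (L (i + 1) - L i) := by
        rw [Finset.sum_range_sub L (N - 1)]
        simp only [hL]
        have hb0 : b' 0 = b ⟨0, by omega⟩ := by
          simp only [hb']; congr 1
        have hbn : b' (N - 1) = b ⟨N - 1, by omega⟩ := by
          simp only [hb']; congr 1; exact Fin.ext (Nat.mod_eq_of_lt (by omega))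
        rw [hb0, hbn]
        push_cast [Nat.cast_sub hN]
        ring
    _ ≤ ∑ i ∈ range (N - 1), -((c (i + 1) - c i) * ∑ j ∈ range (i + 1), g j) :=
        Finset.sum_le_sum hterm
    _ = - ∑ i ∈ range (N - 1), (c (i + 1) - c i) * ∑ j ∈ range (i + 1), g j := by
        rw [Finset.sum_neg_distrib]
end

section
/- Let q, N_1, N_2 ∈ ℕ and let b^{(1)} ∈ ℕ_0^{N_1}, b^{(2)} ∈ ℕ_0^{N_2} be weakly increasing tuples. Suppose μ^{(1)} ⪯ λ^{(q)}_{N_1}(b^{(1)}) and μ^{(2)} ⪯ λ^{(q)}_{N_2}(b^{(2)}). Define the concatenation μ^{(1)} ∪ μ^{(2)} = (μ^{(1)}_1, …, μ^{(1)}_{N_1}, qN_1 + b^{(1)}_{N_1} + μ^{(2)}_1, …, qN_1 + b^{(1)}_{N_1} + μ^{(2)}_{N_2}) and the composed tuple b = (b^{(1)}_1, …, b^{(1)}_{N_1}, b^{(1)}_{N_1} + b^{(2)}_1, …, b^{(1)}_{N_1} + b^{(2)}_{N_2}). Then μ^{(1)} ∪ μ^{(2)} ⪯ λ^{(q)}_{N_1+N_2}(b)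 in dominance order. -/
open Finset

namespace Fin

variable {M : Type*} [AddCommMonoid M] {m n : ℕ}

theorem sum_Ici_castAdd_append (f : Fin m → M) (g : Fin n → M) (k : Fin m) :
    ∑ j ∈ Ici (castAdd n k), append f g j = ∑ j ∈ Ici k, f j + ∑ j, g j := by
  simp only [← filter_le_eq_Ici, sum_filter, sum_univ_add, append_left, append_right, le_def,
    val_castAdd, val_natAdd]
  congr 1
  exact sum_congr rfl fun j _ => if_pos (by omega)

theorem sum_Ici_natAdd_append (f : Fin m → M) (g : Fin n → M) (k : Fin n) :
    ∑ j ∈ Ici (natAdd m k), append f g j = ∑ j ∈ Ici k, g j := by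
  rw [← map_natAddEmb_Ici, sum_map]
  simp only [natAddEmb_apply, append_right]

end Fin

namespace DominatedBy

variable {k m n : ℕ}

theorem append {μ lam : Fin m → ℕ} {ν κ : Fin n → ℕ}
    (h₁ : DominatedBy μ lam) (h₂ : DominatedBy ν κ) (hsum : ∑ j, ν j ≤ ∑ j, κ j) :
    DominatedBy (Fin.append μ ν) (Fin.append lam κ) := by
  intro i
  induction i using Fin.addCases with
  | left i =>
    rw [Fin.sum_Ici_castAdd_append, Fin.sum_Ici_castAdd_append]
    exact add_le_add (h₁ i) hsum
  | right i =>
    rw [Fin.sum_Ici_natAdd_append, Fin.sum_Ici_natAdd_append]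
    exact h₂ i

theorem const_add {μ lam : Fin k → ℕ} (h : DominatedBy μ lam) (c : ℕ) :
    DominatedBy (fun j => c + μ j) (fun j => c + lam j) := fun i => by
  simp only [sum_add_distrib]
  exact add_le_add le_rfl (h i)

end DominatedBy

/-- `λ^{(q)}_k(b)`, with `j` counted from `0`, so that `q (j - 1)` becomes `q * j`. -/
def rootPartition {k : ℕ} (q : ℕ) (b : Fin k → ℕ) : Fin k → ℕ :=
  fun j => q * j + b j

theorem rootPartition_append {m n : ℕ} (q : ℕ) (b₁ : Fin m → ℕ) (b₂ : Fin n → ℕ) (c : ℕ) :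
    rootPartition q (Fin.append b₁ fun j => c + b₂ j) =
      Fin.append (rootPartition q b₁) fun j => (q * m + c) + rootPartition q b₂ j := by
  funext j
  induction j using Fin.addCases with
  | left j => simp [rootPartition]
  | right j => simp only [rootPartition, Fin.append_right, Fin.val_natAdd]; ring

/-- The concatenation of two partitions dominated by root partitions is dominated
by the root partition of the composed root. -/
theorem concat_dominated (q N₁ N₂ : ℕ) (hN₁ : 1 ≤ N₁)
    (b₁ : Fin N₁ → ℕ) (b₂ : Fin N₂ → ℕ)
    (μ₁ : Fin N₁ → ℕ) (μ₂ : Fin N₂ → ℕ)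
    (hsum₂ : ∑ j, μ₂ j = ∑ j : Fin N₂, (q * (j : ℕ) + b₂ j))
    (hdom₁ : DominatedBy μ₁ (fun j => q * (j : ℕ) + b₁ j))
    (hdom₂ : DominatedBy μ₂ (fun j => q * (j : ℕ) + b₂ j)) :
    DominatedBy
      (Fin.append μ₁ (fun j => q * N₁ + b₁ ⟨N₁ - 1, by omega⟩ + μ₂ j))
      (fun j : Fin (N₁ + N₂) =>
        q * (j : ℕ) + Fin.append b₁ (fun i => b₁ ⟨N₁ - 1, by omega⟩ + b₂ i) j) := by
  set c := b₁ ⟨N₁ - 1, by omega⟩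
  change DominatedBy _ (rootPartition q (Fin.append b₁ fun i => c + b₂ i))
  rw [rootPartition_append]
  refine DominatedBy.append hdom₁ (hdom₂.const_add _) ?_
  simp only [sum_add_distrib, hsum₂, rootPartition, le_refl]
end

section
/- Let λ be a partition (weakly increasing tuple of nonnegative integers) of length n, let 1 ≤ i < j ≤ n and s ∈ ℕ with s ≤ (λ_j − λ_i)/2, and suppose λ_i < λ_{i+1} and λ_j > λ_{j−1} (admissibility). Let R_{ij}^s λ be the weakly increasing rearrangement of the tuple obtained by replacing λ_i with λ_i + s and λ_j with λ_j − s. Then R_{ij}^s λ is a partition of the same integer with the same length, and R_{ij}^s λ ⪯ λ in dominance order. -/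
open Finset Function Equiv

namespace Finset

variable {α β : Type*} [LinearOrder α] [LocallyFiniteOrderTop α]
  [AddCommMonoid β] [PartialOrder β] [IsOrderedAddMonoid β] [CanonicallyOrderedAdd β]

theorem sum_le_sum_Ici_of_card_le {f : α → β} (hf : Monotone f) {T : Finset α} {t : α}
    (hT : #T ≤ #(Ici t)) : ∑ k ∈ T, f k ≤ ∑ k ∈ Ici t, f k := by
  classical
  have hout : ∑ k ∈ T \ Ici t, f k ≤ #(T \ Ici t) • f t :=
    sum_le_card_nsmul _ _ _ fun k hk => hf (not_le.1 (by simpa using (mem_sdiff.1 hk).2)).le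
  have hin : #(Ici t \ T) • f t ≤ ∑ k ∈ Ici t \ T, f k :=
    card_nsmul_le_sum _ _ _ fun k hk => hf (mem_Ici.1 (mem_sdiff.1 hk).1)
  have hcard : #(T \ Ici t) ≤ #(Ici t \ T) := card_sdiff_le_card_sdiff_iff.2 hT
  calc ∑ k ∈ T, f k = ∑ k ∈ T ∩ Ici t, f k + ∑ k ∈ T \ Ici t, f k :=
        (sum_inter_add_sum_sdiff _ _ _).symm
    _ ≤ ∑ k ∈ Ici t ∩ T, f k + ∑ k ∈ Ici t \ T, f k := by
        rw [inter_comm]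
        exact add_le_add_right (hout.trans ((nsmul_le_nsmul_left zero_le hcard).trans hin)) _
    _ = ∑ k ∈ Ici t, f k := sum_inter_add_sum_sdiff _ _ _

end Finset

/-- The tuple `R_{ij}^s lam` before it is sorted. -/
def squeeze {ι : Type*} [DecidableEq ι] (lam : ι → ℕ) (i j : ι) (s : ℕ) : ι → ℕ :=
  update (update lam i (lam i + s)) j (lam j - s)

section Squeeze

variable {ι : Type*} [DecidableEq ι] {lam : ι → ℕ} {i j : ι} {s : ℕ}

theorem squeeze_le_of_ne {k : ι} (hk : k ≠ i) : squeeze lam i j s k ≤ lam k := by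
  by_cases hkj : k = j
  · subst hkj
    simp [squeeze]
  · simp [squeeze, update_of_ne hkj, update_of_ne hk]

theorem squeeze_le_comp_swap (h : lam i + s ≤ lam j) {k : ι} (hk : k ≠ j) :
    squeeze lam i j s k ≤ lam (swap i j k) := by
  by_cases hki : k = i
  · subst hki
    simpa [squeeze, update_of_ne hk] using h
  · simp [squeeze, update_of_ne hk, update_of_ne hki, swap_apply_of_ne_of_ne hki hk]

theorem sum_squeeze_of_mem (hij : i ≠ j) (h : s ≤ lam j) {T : Finset ι} (hi : i ∈ T)
    (hj : j ∈ T) : ∑ k ∈ T, squeeze lam i j s k = ∑ k ∈ T, lam k := by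
  have hi' : i ∈ T \ {j} := by simpa [hij] using hi
  rw [squeeze, sum_update_of_mem hj, sum_update_of_mem hi',
    sum_eq_add_sum_sdiff_singleton_of_mem hj, sum_eq_add_sum_sdiff_singleton_of_mem hi']
  omega

theorem exists_card_eq_sum_squeeze_le (hij : i ≠ j) (h : lam i + s ≤ lam j) (T : Finset ι) :
    ∃ T' : Finset ι, #T' = #T ∧ ∑ k ∈ T, squeeze lam i j s k ≤ ∑ k ∈ T', lam k := by
  by_cases hi : i ∈ T
  · by_cases hj : j ∈ T
    · exact ⟨T, rfl, (sum_squeeze_of_mem hij (by omega) hi hj).le⟩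
    · refine ⟨T.map (swap i j).toEmbedding, card_map _, ?_⟩
      rw [sum_map]
      exact sum_le_sum fun k hk => squeeze_le_comp_swap h (ne_of_mem_of_not_mem hk hj)
  · exact ⟨T, rfl, sum_le_sum fun k hk => squeeze_le_of_ne (ne_of_mem_of_not_mem hk hi)⟩

end Squeeze

theorem dominatedBy_of_forall_exists_card_eq_sum_le {n : ℕ} {ν μ lam : Fin n → ℕ}
    (hlam : Monotone lam) (π : Perm (Fin n)) (hν : ∀ k, ν (π k) = μ k)
    (h : ∀ T : Finset (Fin n), ∃ T' : Finset (Fin n), #T' = #T ∧ ∑ k ∈ T, μ k ≤ ∑ k ∈ T', lam k) :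
    DominatedBy ν lam := by
  intro t
  obtain ⟨T', hcard, hle⟩ := h ((Ici t).map π.symm.toEmbedding)
  calc ∑ k ∈ Ici t, ν k = ∑ k ∈ (Ici t).map π.symm.toEmbedding, μ k := by simp [← hν]
    _ ≤ ∑ k ∈ T', lam k := hle
    _ ≤ ∑ k ∈ Ici t, lam k := sum_le_sum_Ici_of_card_le hlam (by simp [hcard])

/-- Applying an admissible squeezing operator `R_{ij}^s` to a partition yields a
partition of the same integer with the same length, dominated by the original one. -/
theorem squeeze_dominated {n : ℕ} (lam : Fin n → ℕ) (hlam : Monotone lam)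
    (i j : Fin n) (hij : (i : ℕ) < (j : ℕ)) (s : ℕ)
    (hhalf : lam i + 2 * s ≤ lam j)
    (ν : Fin n → ℕ) (π : Equiv.Perm (Fin n))
    (hrearr : ∀ k : Fin n,
      ν (π k) = Function.update (Function.update lam i (lam i + s)) j (lam j - s) k) :
    (∑ k, ν k = ∑ k, lam k) ∧ DominatedBy ν lam := by
  have hne : i ≠ j := Fin.ne_of_lt hij
  have hsj : lam i + s ≤ lam j := by omega
  refine ⟨?_, dominatedBy_of_forall_exists_card_eq_sum_le hlam π hrearr
    (exists_card_eq_sum_squeeze_le hne hsj)⟩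
  rw [← Equiv.sum_comp π ν]
  exact (sum_congr rfl fun k _ => hrearr k).trans
    (sum_squeeze_of_mem hne (by omega) (mem_univ i) (mem_univ j))
end

section
/- For every n ∈ ℕ, the number p(n) of partitions of n satisfies p(n) ≤ exp(π √(2n/3)). -/
/-!
A partition of `n` is determined by the multiplicities `m_k` of its parts `k ≤ n`, which satisfy
`∑ k m_k = n`; hence `p(n) x ^ n ≤ ∏_{k ≤ n} (1 - x ^ k)⁻¹` for `0 < x < 1`. Expanding the
logarithms and summing the geometric series in `k` first, using
`x ^ j / (1 - x ^ j) ≤ x / (j (1 - x))`, the logarithm of that product is at most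
`ζ(2) x / (1 - x)`. With `x = 1 / (1 + t)` this gives
`p(n) ≤ exp (π ^ 2 / (6 t) + n t)`, and the optimal `t = π / √(6 n)` gives the bound.
-/

open Finset Real

section GeomSum

variable {R : Type*} [CommRing R] [LinearOrder R] [IsStrictOrderedRing R] {x : R}

lemma succ_mul_pow_mul_one_sub_le (hx0 : 0 ≤ x) (hx1 : x ≤ 1) (j : ℕ) :
    (j + 1) * x ^ j * (1 - x) ≤ 1 - x ^ (j + 1) := by
  rw [← geom_sum_mul_of_le_one hx1]
  have hle : ∀ i ∈ range (j + 1), x ^ j ≤ x ^ i := fun i hi =>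
    pow_le_pow_of_le_one hx0 hx1 (mem_range_succ_iff.mp hi)
  have hsum := card_nsmul_le_sum _ _ _ hle
  rw [card_range, nsmul_eq_mul] at hsum
  push_cast at hsum
  exact mul_le_mul_of_nonneg_right hsum (sub_nonneg.mpr hx1)

end GeomSum

section GeomSumField

variable {K : Type*} [Field K] [LinearOrder K] [IsStrictOrderedRing K] {y : K}

lemma sum_range_pow_le_inv_one_sub (hy0 : 0 ≤ y) (hy1 : y < 1) (N : ℕ) :
    ∑ k ∈ range N, y ^ k ≤ (1 - y)⁻¹ := by
  have h := geom_sum_Ico_le_of_lt_one (m := 0) (n := N) hy0 hy1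
  rwa [← range_eq_Ico, pow_zero, one_div] at h

lemma sum_range_pow_succ_le (hy0 : 0 ≤ y) (hy1 : y < 1) (N : ℕ) :
    ∑ k ∈ range N, y ^ (k + 1) ≤ y / (1 - y) := by
  simp only [pow_succ', ← mul_sum, div_eq_mul_inv]
  exact mul_le_mul_of_nonneg_left (sum_range_pow_le_inv_one_sub hy0 hy1 N) hy0

end GeomSumField

lemma hasSum_one_div_succ_sq : HasSum (fun j : ℕ => 1 / ((j : ℝ) + 1) ^ 2) (π ^ 2 / 6) := by
  simpa using (hasSum_nat_add_iff' 1).mpr hasSum_zeta_two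

lemma sum_range_pow_succ_pow_succ_div_le {x : ℝ} (hx0 : 0 < x) (hx1 : x < 1) (n j : ℕ) :
    ∑ k ∈ range n, (x ^ (k + 1)) ^ (j + 1) / (j + 1) ≤ x / (1 - x) * (1 / ((j : ℝ) + 1) ^ 2) := by
  have hy0 : 0 ≤ x ^ (j + 1) := by positivity
  have hy1 : x ^ (j + 1) < 1 := pow_lt_one₀ hx0.le hx1 j.succ_ne_zero
  have hgeom : x ^ (j + 1) / (1 - x ^ (j + 1)) ≤ x / ((j + 1) * (1 - x)) := by
    rw [div_le_div_iff₀ (by linarith) (by nlinarith)]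
    calc x ^ (j + 1) * ((j + 1) * (1 - x)) = x * ((j + 1) * x ^ j * (1 - x)) := by ring
      _ ≤ x * (1 - x ^ (j + 1)) :=
        mul_le_mul_of_nonneg_left (succ_mul_pow_mul_one_sub_le hx0.le hx1.le j) hx0.le
  calc ∑ k ∈ range n, (x ^ (k + 1)) ^ (j + 1) / (j + 1)
      = (∑ k ∈ range n, (x ^ (j + 1)) ^ (k + 1)) / (j + 1) := by
        rw [sum_div]
        simp only [← pow_mul, mul_comm]
    _ ≤ x ^ (j + 1) / (1 - x ^ (j + 1)) / (j + 1) := by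
        gcongr
        exact sum_range_pow_succ_le hy0 hy1 n
    _ ≤ x / ((j + 1) * (1 - x)) / (j + 1) := by gcongr
    _ = x / (1 - x) * (1 / ((j : ℝ) + 1) ^ 2) := by field_simp

lemma sum_range_neg_log_one_sub_pow_le {x : ℝ} (hx0 : 0 < x) (hx1 : x < 1) (n : ℕ) :
    ∑ k ∈ range n, -Real.log (1 - x ^ (k + 1)) ≤ π ^ 2 / 6 * (x / (1 - x)) := by
  have hlog : ∀ k ∈ range n, HasSum (fun j : ℕ => (x ^ (k + 1)) ^ (j + 1) / (j + 1))
      (-log (1 - x ^ (k + 1))) := fun k _ => by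
    refine hasSum_pow_div_log_of_abs_lt_one ?_
    rw [abs_of_nonneg (by positivity)]
    exact pow_lt_one₀ hx0.le hx1 k.succ_ne_zero
  rw [mul_comm]
  exact hasSum_le (sum_range_pow_succ_pow_succ_div_le hx0 hx1 n) (hasSum_sum hlog)
    (hasSum_one_div_succ_sq.mul_left _)

namespace Nat.Partition

variable {n : ℕ}

def multiplicities (p : n.Partition) (i : Fin n) : ℕ := p.parts.count ((i : ℕ) + 1)

lemma count_le (p : n.Partition) (k : ℕ) : p.parts.count k ≤ n := by
  calc p.parts.count k ≤ Multiset.card p.parts := Multiset.count_le_card _ _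
    _ = Multiset.card p.parts • 1 := by simp
    _ ≤ p.parts.sum := Multiset.card_nsmul_le_sum fun _ hx => p.parts_pos hx
    _ = n := p.parts_sum

lemma multiplicities_injective : Function.Injective (multiplicities (n := n)) := by
  intro p q h
  ext m
  by_cases hm : m ∈ Icc 1 n
  · obtain ⟨h1, h2⟩ := mem_Icc.mp hm
    simpa [multiplicities, Nat.sub_add_cancel h1] using congrFun h ⟨m - 1, by omega⟩
  · have hp : m ∉ p.parts := fun hm' => hm (mem_Icc.mpr ⟨p.parts_pos hm', p.le_of_mem_parts hm'⟩)
    have hq : m ∉ q.parts := fun hm' => hm (mem_Icc.mpr ⟨q.parts_pos hm', q.le_of_mem_parts hm'⟩)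
    rw [Multiset.count_eq_zero_of_notMem hp, Multiset.count_eq_zero_of_notMem hq]

lemma sum_succ_mul_multiplicities (p : n.Partition) :
    ∑ i : Fin n, ((i : ℕ) + 1) * p.multiplicities i = n := by
  have h := p.toFinsuppAntidiag_mem_finsuppAntidiag
  rw [mem_finsuppAntidiag] at h
  refine Eq.trans ?_ h.1
  unfold multiplicities
  rw [Fin.sum_univ_eq_sum_range (fun i => (i + 1) * p.parts.count (i + 1)), range_eq_Ico,
    sum_Ico_add' (fun i => i * p.parts.count i), zero_add, Ico_add_one_right_eq_Icc]
  simp [toFinsuppAntidiag, mul_comm]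

lemma multiplicities_mem_piFinset (p : n.Partition) :
    p.multiplicities ∈ Fintype.piFinset fun _ => range (n + 1) :=
  Fintype.mem_piFinset.mpr fun _ => mem_range_succ_iff.mpr (p.count_le _)

theorem card_mul_pow_le_prod {x : ℝ} (hx : 0 ≤ x) :
    (Fintype.card n.Partition : ℝ) * x ^ n ≤
      ∏ k ∈ range n, ∑ m ∈ range (n + 1), x ^ ((k + 1) * m) := by
  classical
  set w : (Fin n → ℕ) → ℝ := fun g => ∏ i : Fin n, x ^ (((i : ℕ) + 1) * g i)
  have hw : ∀ p : n.Partition, w p.multiplicities = x ^ n := fun p => by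
    simp only [w, prod_pow_eq_pow_sum, sum_succ_mul_multiplicities]
  calc (Fintype.card n.Partition : ℝ) * x ^ n = ∑ p : n.Partition, w p.multiplicities := by
        simp [hw]
    _ = ∑ g ∈ univ.image multiplicities, w g :=
        (sum_image fun _ _ _ _ h => multiplicities_injective h).symm
    _ ≤ ∑ g ∈ Fintype.piFinset fun _ => range (n + 1), w g :=
        sum_le_sum_of_subset_of_nonneg
          (image_subset_iff.mpr fun p _ => p.multiplicities_mem_piFinset)
          fun _ _ _ => prod_nonneg fun _ _ => pow_nonneg hx _
    _ = ∏ k ∈ range n, ∑ m ∈ range (n + 1), x ^ ((k + 1) * m) := by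
        rw [← Fin.prod_univ_eq_prod_range fun k => ∑ m ∈ range (n + 1), x ^ ((k + 1) * m),
          prod_univ_sum]

theorem card_mul_pow_le_exp {x : ℝ} (hx0 : 0 < x) (hx1 : x < 1) :
    (Fintype.card n.Partition : ℝ) * x ^ n ≤ exp (π ^ 2 / 6 * (x / (1 - x))) := by
  have hpow : ∀ k : ℕ, x ^ (k + 1) < 1 := fun k => pow_lt_one₀ hx0.le hx1 k.succ_ne_zero
  calc (Fintype.card n.Partition : ℝ) * x ^ n
      ≤ ∏ k ∈ range n, ∑ m ∈ range (n + 1), x ^ ((k + 1) * m) := card_mul_pow_le_prod hx0.le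
    _ ≤ ∏ k ∈ range n, (1 - x ^ (k + 1))⁻¹ := by
        refine prod_le_prod (fun _ _ => sum_nonneg fun _ _ => by positivity) fun k _ => ?_
        simp only [pow_mul]
        exact sum_range_pow_le_inv_one_sub (by positivity) (hpow k) _
    _ = exp (∑ k ∈ range n, -Real.log (1 - x ^ (k + 1))) := by
        rw [exp_sum]
        refine prod_congr rfl fun k _ => ?_
        rw [exp_neg, Real.exp_log (sub_pos.mpr (hpow k))]
    _ ≤ exp (π ^ 2 / 6 * (x / (1 - x))) :=
        exp_le_exp.mpr (sum_range_neg_log_one_sub_pow_le hx0 hx1 n)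

theorem card_le_exp {t : ℝ} (ht : 0 < t) :
    (Fintype.card n.Partition : ℝ) ≤ exp (π ^ 2 / (6 * t) + n * t) := by
  set x : ℝ := (1 + t)⁻¹ with hx
  have hx0 : 0 < x := by positivity
  have hx1 : x < 1 := inv_lt_one_of_one_lt₀ (by linarith)
  have hratio : x / (1 - x) = 1 / t := by
    rw [hx]
    field_simp
    rw [add_sub_cancel_left, div_self ht.ne']
  calc (Fintype.card n.Partition : ℝ) = Fintype.card n.Partition * x ^ n * (1 + t) ^ n := by
        rw [mul_assoc, ← mul_pow, hx, inv_mul_cancel₀ (by positivity), one_pow, mul_one]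
    _ ≤ exp (π ^ 2 / 6 * (x / (1 - x))) * exp t ^ n := by
        gcongr
        · exact card_mul_pow_le_exp hx0 hx1
        · linarith [add_one_le_exp t]
    _ = exp (π ^ 2 / (6 * t) + n * t) := by
        rw [hratio, ← exp_nat_mul, ← exp_add]
        congr 1
        field_simp

end Nat.Partition

theorem partition_count_bound_general (n : ℕ) :
    (Fintype.card (Nat.Partition n) : ℝ) ≤
      Real.exp (Real.pi * Real.sqrt (2 * n / 3)) := by
  rcases n.eq_zero_or_pos with rfl | hn
  · simp
  set s := √(2 * n / 3)
  have hs : 0 < s := sqrt_pos.mpr (by positivity)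
  have hs2 : s ^ 2 = 2 * n / 3 := sq_sqrt (by positivity)
  -- `t = π / (3 s)` minimises `π ^ 2 / (6 t) + n t`, the minimum being `π s`
  have ht : 0 < π / (3 * s) := by positivity
  calc (Fintype.card n.Partition : ℝ) ≤ exp (π ^ 2 / (6 * (π / (3 * s))) + n * (π / (3 * s))) :=
        Nat.Partition.card_le_exp ht
    _ = exp (π * s) := by
        congr 1
        field_simp
        linear_combination (-9) * hs2

/-- The number of partitions of `n` is at most `exp(π √(2n/3))`. -/
theorem partition_count_bound (n : ℕ) (hn : 1 ≤ n) :
    (Fintype.card (Nat.Partition n) : ℝ) ≤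
      Real.exp (Real.pi * Real.sqrt (2 * n / 3)) :=
  partition_count_bound_general n
end

section
/- Let b = (b_1,…,b_N) ∈ ℕ_0^N be weakly increasing, q ∈ ℕ, c = 4q+1, and define for a permutation τ of {1,…,N} the quantity S_N(τ) = c Σ_{j=1}^N j (b_{τ(j)} − b_j). Let M(b)! = Π_{k≥0} m(b,k)! where m(b,k) is the number of indices j with b_j = k. Then (1/M(b)!) Σ_{τ ∈ S_N} exp(S_N(τ)) ≤ (1 − e^{−c})^{−(N−1)}. -/
/-!
Split a permutation `τ` of `Fin (n + 1)` as `insertLast i σ`, where `i` is the position of the last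
letter, which carries the largest value `L` of `b`. Then the energy of `τ` is the energy of `σ`
(for `b` without its last letter) minus the tail sum `∑_{j ≥ i} (L - b (σ j))` of nonnegative gaps.
As `i` decreases the tail sums weakly increase, and they stay constant only across the `m` zero
gaps, i.e. the other letters of value `L`. So summing `e^{-c · tail}` over `i` gives at most `m`
terms bounded by `1`, plus distinct powers of `e^{-c}`, whose sum is at most `(1 - e^{-c})⁻¹`. Each
letter therefore costs a factor `(m + 1) / (1 - e^{-c})`, and `m + 1` is exactly the factor by which
`M(b)!` grows.
-/

open Finset Equiv Real

variable {n : ℕ}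

noncomputable def energy (b : Fin n → ℕ) (τ : Perm (Fin n)) : ℝ :=
  ∑ j : Fin n, ((j : ℕ) + 1 : ℝ) * ((b (τ j) : ℝ) - (b j : ℝ))

noncomputable def permSum (c : ℝ) (b : Fin n → ℕ) : ℝ :=
  ∑ τ : Perm (Fin n), exp (c * energy b τ)

def multiplicityFactorial {α β : Type*} [Fintype α] [DecidableEq β] (b : α → β) : ℕ :=
  ∏ k ∈ univ.image b, (#{j | b j = k}).factorial

def tailSum (e : Fin n → ℕ) (i : Fin (n + 1)) : ℕ :=
  ∑ j with i ≤ j.castSucc, e j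

def insertLast (i : Fin (n + 1)) (σ : Perm (Fin n)) : Perm (Fin (n + 1)) :=
  (finSuccEquiv' i).trans ((optionCongr σ).trans finSuccEquivLast.symm)

section Geometric

variable {t : ℝ}

theorem sum_pow_le_inv_one_sub_of_injOn {ι : Type*} {s : Finset ι} {g : ι → ℕ}
    (hg : Set.InjOn g s) (ht0 : 0 ≤ t) (ht1 : t < 1) :
    ∑ i ∈ s, t ^ g i ≤ (1 - t)⁻¹ := by
  rw [← sum_image (f := (t ^ ·)) hg, ← tsum_geometric_of_lt_one ht0 ht1]
  exact (summable_geometric_of_lt_one ht0 ht1).sum_le_tsum _ fun k _ => pow_nonneg ht0 k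

theorem sum_pow_le_card_plateaus_add (E : Fin (n + 1) → ℕ) (hE : Antitone E)
    (ht0 : 0 ≤ t) (ht1 : t < 1) :
    ∑ i, t ^ E i ≤ #{j : Fin n | E j.succ = E j.castSucc} + (1 - t)⁻¹ := by
  set A : Finset (Fin n) := {j | E j.succ = E j.castSucc}
  set P := A.map Fin.castSuccEmb
  have hA : ∑ i ∈ P, t ^ E i ≤ #A := by
    rw [sum_map, ← nsmul_one, ← sum_const]
    exact sum_le_sum fun j _ => pow_le_one₀ ht0 ht1.le
  -- on the complement of the plateaus `E` strictly decreases
  have hinj : Set.InjOn E ↑(univ \ P) := by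
    have key : ∀ i i', i ∉ P → i < i' → E i ≠ E i' := by
      intro i i' hi hlt heq
      obtain ⟨j, rfl⟩ := Fin.exists_castSucc_eq.mpr (Fin.ne_last_of_lt hlt)
      have hsucc : j.succ ≤ i' := Fin.castSucc_lt_iff_succ_le.mp hlt
      refine hi (mem_map_of_mem _ (mem_filter.mpr ⟨mem_univ j, ?_⟩))
      exact le_antisymm (hE (Fin.castSucc_le_succ j)) (heq.trans_le (hE hsucc))
    intro i hi i' hi' heq
    simp only [coe_sdiff, coe_univ, Set.mem_sdiff, Set.mem_univ, true_and, mem_coe] at hi hi'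
    by_contra hne
    rcases lt_or_gt_of_ne hne with hlt | hlt
    · exact key i i' hi hlt heq
    · exact key i' i hi' hlt heq.symm
  rw [← sum_sdiff (subset_univ P), add_comm]
  exact add_le_add hA (sum_pow_le_inv_one_sub_of_injOn hinj ht0 ht1)

end Geometric

theorem card_filter_le_castSucc (i : Fin (n + 1)) : #{j : Fin n | i ≤ j.castSucc} = n - i := by
  have h := card_filter_add_card_filter_not (s := (univ : Finset (Fin n))) (fun j => (j : ℕ) < i)
  simp only [Fin.card_filter_val_lt, card_univ, Fintype.card_fin, not_lt] at h
  simp only [Fin.le_def, Fin.val_castSucc]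
  omega

theorem tailSum_antitone (e : Fin n → ℕ) : Antitone (tailSum e) := fun _ _ h =>
  sum_le_sum_of_subset (monotone_filter_right _ fun _ _ hj => h.trans hj)

theorem tailSum_castSucc (e : Fin n → ℕ) (j : Fin n) :
    tailSum e j.castSucc = e j + tailSum e j.succ := by
  simp only [tailSum, Fin.castSucc_le_castSucc_iff, Fin.succ_le_castSucc_iff]
  rw [filter_le_eq_Ici, filter_lt_eq_Ioi, Ici_eq_cons_Ioi, sum_cons]

theorem sum_pow_tailSum_le (e : Fin n → ℕ) {t : ℝ} (ht0 : 0 ≤ t) (ht1 : t < 1) :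
    ∑ i, t ^ tailSum e i ≤ #{j | e j = 0} + (1 - t)⁻¹ := by
  have h := sum_pow_le_card_plateaus_add _ (tailSum_antitone e) ht0 ht1
  simp only [tailSum_castSucc, right_eq_add] at h
  exact h

@[simp] theorem insertLast_apply_self (i : Fin (n + 1)) (σ : Perm (Fin n)) :
    insertLast i σ i = Fin.last n := by
  simp [insertLast]

@[simp] theorem insertLast_apply_succAbove (i : Fin (n + 1)) (σ : Perm (Fin n)) (j : Fin n) :
    insertLast i σ (i.succAbove j) = (σ j).castSucc := by
  simp [insertLast]

theorem insertLast_bijective :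
    Function.Bijective fun p : Fin (n + 1) × Perm (Fin n) => insertLast p.1 p.2 := by
  rw [Fintype.bijective_iff_injective_and_card]
  refine ⟨fun ⟨i, σ⟩ ⟨i', σ'⟩ h => ?_, by simp [Fintype.card_perm, Nat.factorial_succ]⟩
  simp only at h
  obtain rfl : i = i' := (insertLast i σ).injective <| by
    rw [insertLast_apply_self, h, insertLast_apply_self]
  refine Prod.ext rfl (Equiv.ext fun j => Fin.castSucc_injective n ?_)
  simpa using congr($h (i.succAbove j))

theorem energy_one (b : Fin n → ℕ) : energy b 1 = 0 := by
  simp [energy]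

theorem energy_eq_sub (b : Fin n → ℕ) (τ : Perm (Fin n)) :
    energy b τ =
      ∑ j : Fin n, ((j : ℕ) + 1 : ℝ) * b (τ j) - ∑ j : Fin n, ((j : ℕ) + 1 : ℝ) * b j := by
  simp only [energy, mul_sub, sum_sub_distrib]

theorem energy_insertLast (b : Fin (n + 1) → ℕ) (hb : ∀ j, b j ≤ b (Fin.last n))
    (i : Fin (n + 1)) (σ : Perm (Fin n)) :
    energy b (insertLast i σ) =
      energy (Fin.init b) σ - tailSum (fun j => b (Fin.last n) - Fin.init b (σ j)) i := by
  set L : ℝ := (b (Fin.last n) : ℝ)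
  set S : ℝ := ∑ j with i ≤ j.castSucc, (Fin.init b (σ j) : ℝ) with hS
  have hτ : ∑ k : Fin (n + 1), ((k : ℕ) + 1 : ℝ) * b (insertLast i σ k) =
      (i + 1) * L + ∑ j : Fin n, ((j : ℕ) + 1 : ℝ) * Fin.init b (σ j) + S := by
    rw [Fin.sum_univ_succAbove _ i, insertLast_apply_self, add_assoc, hS, sum_filter,
      ← sum_add_distrib]
    congr 1
    refine sum_congr rfl fun j _ => ?_
    simp only [insertLast_apply_succAbove, Fin.init]
    split_ifs with h
    · rw [Fin.succAbove_of_le_castSucc _ _ h, Fin.val_succ]; push_cast; ring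
    · rw [Fin.succAbove_of_castSucc_lt _ _ (not_le.mp h), Fin.val_castSucc]; ring
  have hid : ∑ k : Fin (n + 1), ((k : ℕ) + 1 : ℝ) * b k =
      (n + 1) * L + ∑ j : Fin n, ((j : ℕ) + 1 : ℝ) * Fin.init b j := by
    rw [Fin.sum_univ_castSucc, Fin.val_last, add_comm]
    rfl
  have htail :
      (tailSum (fun j => b (Fin.last n) - Fin.init b (σ j)) i : ℝ) = (n - i) * L - S := by
    rw [tailSum, Nat.cast_sum]
    simp only [Nat.cast_sub (hb _), Fin.init, sum_sub_distrib, sum_const, card_filter_le_castSucc,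
      nsmul_eq_mul, Nat.cast_sub (Nat.lt_succ_iff.mp i.isLt)]
    rfl
  rw [energy_eq_sub, energy_eq_sub, hτ, hid, htail]
  ring

theorem multiplicityFactorial_eq (b : Fin (n + 1) → ℕ) :
    multiplicityFactorial b =
      (#{j | Fin.init b j = b (Fin.last n)} + 1) * multiplicityFactorial (Fin.init b) := by
  set L := b (Fin.last n)
  set s := insert L (univ.image (Fin.init b))
  have hcount : ∀ k, #{j | b j = k} = #{j | Fin.init b j = k} + if L = k then 1 else 0 := by
    intro k
    simp only [card_filter]
    rw [Fin.sum_univ_castSucc]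
    rfl
  have himage : univ.image b = s := by
    ext k
    simp [s, Fin.exists_fin_succ', or_comm, eq_comm, L, Fin.init]
  have hb : multiplicityFactorial b =
      (#{j | Fin.init b j = L} + 1).factorial *
        ∏ k ∈ s.erase L, (#{j | Fin.init b j = k}).factorial := by
    rw [multiplicityFactorial, himage, ← mul_prod_erase _ _ (mem_insert_self _ _), hcount,
      if_pos rfl]
    refine congrArg _ (prod_congr rfl fun k hk => ?_)
    rw [hcount, if_neg (ne_of_mem_erase hk).symm, add_zero]
  have hinit : multiplicityFactorial (Fin.init b) =
      (#{j | Fin.init b j = L}).factorial *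
        ∏ k ∈ s.erase L, (#{j | Fin.init b j = k}).factorial := by
    rw [multiplicityFactorial, prod_subset (subset_insert L _),
      ← mul_prod_erase _ _ (mem_insert_self _ _)]
    intro k _ hk
    have hempty : #{j | Fin.init b j = k} = 0 := card_eq_zero.mpr <|
      filter_eq_empty_iff.mpr fun j _ (h : Fin.init b j = k) =>
        hk (h ▸ mem_image_of_mem _ (mem_univ j))
    rw [hempty, Nat.factorial_zero]
  rw [hb, hinit, Nat.factorial_succ, mul_assoc]

theorem multiplicityFactorial_pos {α β : Type*} [Fintype α] [DecidableEq β] (b : α → β) :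
    0 < multiplicityFactorial b :=
  prod_pos fun _ _ => Nat.factorial_pos _

theorem permSum_of_le_one (hn : n ≤ 1) (c : ℝ) (b : Fin n → ℕ) : permSum c b = 1 := by
  have := Fin.subsingleton_iff_le_one.mpr hn
  rw [permSum, Fintype.sum_subsingleton _ 1, energy_one, mul_zero, exp_zero]

theorem permSum_succ_le {c : ℝ} (hc : 0 < c) (b : Fin (n + 1) → ℕ) (hb : Monotone b) :
    permSum c b ≤ (#{j | Fin.init b j = b (Fin.last n)} + 1) * (1 - exp (-c))⁻¹ *
      permSum c (Fin.init b) := by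
  set t := exp (-c) with ht
  have ht0 : 0 ≤ t := (exp_pos _).le
  have ht1 : t < 1 := exp_lt_one_iff.mpr (neg_lt_zero.mpr hc)
  have hle : ∀ j, b j ≤ b (Fin.last n) := fun j => hb (Fin.le_last j)
  set m := #{j | Fin.init b j = b (Fin.last n)}
  set gap : Perm (Fin n) → Fin n → ℕ := fun σ j => b (Fin.last n) - Fin.init b (σ j)
  have hgap : ∀ σ, #{j | gap σ j = 0} = m := by
    intro σ
    have hzero : ∀ j, gap σ j = 0 ↔ Fin.init b (σ j) = b (Fin.last n) := fun j =>
      Nat.sub_eq_zero_iff_le.trans ⟨fun h => le_antisymm (hle _) h, fun h => h.ge⟩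
    simp only [hzero, card_filter]
    exact (Equiv.sum_comp σ (fun k => if Fin.init b k = b (Fin.last n) then 1 else 0)).trans
      (card_filter _ _).symm
  have hinner : ∀ σ, ∑ i, t ^ tailSum (gap σ) i ≤ (m + 1) * (1 - t)⁻¹ := by
    intro σ
    have hinv : 1 ≤ (1 - t)⁻¹ := one_le_inv₀ (by linarith) |>.mpr (by linarith)
    calc ∑ i, t ^ tailSum (gap σ) i ≤ m + (1 - t)⁻¹ := hgap σ ▸ sum_pow_tailSum_le _ ht0 ht1
      _ ≤ (m + 1) * (1 - t)⁻¹ := by nlinarith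
  calc permSum c b
      = ∑ σ, exp (c * energy (Fin.init b) σ) * ∑ i, t ^ tailSum (gap σ) i := by
        rw [permSum, ← Fintype.sum_bijective _ insertLast_bijective _ _ fun _ => rfl,
          Fintype.sum_prod_type, sum_comm]
        refine sum_congr rfl fun σ _ => ?_
        rw [mul_sum]
        refine sum_congr rfl fun i _ => ?_
        rw [energy_insertLast b hle, ht, ← exp_nat_mul, ← exp_add]
        ring_nf
        rfl
    _ ≤ ∑ σ, exp (c * energy (Fin.init b) σ) * ((m + 1) * (1 - t)⁻¹) :=
        sum_le_sum fun σ _ => mul_le_mul_of_nonneg_left (hinner σ) (exp_pos _).le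
    _ = (m + 1) * (1 - t)⁻¹ * permSum c (Fin.init b) := by
        rw [← sum_mul, permSum, mul_comm]

theorem permSum_le {c : ℝ} (hc : 0 < c) :
    ∀ {n : ℕ} (b : Fin n → ℕ), Monotone b →
      permSum c b ≤ multiplicityFactorial b * ((1 - exp (-c)) ^ (n - 1))⁻¹
  | 0, b, _ | 1, b, _ => by
    simpa [permSum_of_le_one] using Nat.one_le_iff_ne_zero.mpr (multiplicityFactorial_pos b).ne'
  | n + 2, b, hb => by
    have h1t : 0 < 1 - exp (-c) := sub_pos.mpr (exp_lt_one_iff.mpr (neg_lt_zero.mpr hc))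
    have hinit : Monotone (Fin.init b) := fun _ _ h => hb (Fin.castSucc_le_castSucc_iff.mpr h)
    set m := #{j | Fin.init b j = b (Fin.last (n + 1))}
    calc permSum c b
        ≤ (m + 1) * (1 - exp (-c))⁻¹ * permSum c (Fin.init b) := permSum_succ_le hc b hb
      _ ≤ (m + 1) * (1 - exp (-c))⁻¹ *
            (multiplicityFactorial (Fin.init b) * ((1 - exp (-c)) ^ n)⁻¹) :=
          mul_le_mul_of_nonneg_left (permSum_le hc _ hinit) (by positivity)
      _ = multiplicityFactorial b * ((1 - exp (-c)) ^ (n + 1))⁻¹ := by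
          rw [multiplicityFactorial_eq b, pow_succ, mul_inv]
          push_cast
          ring

theorem permutation_sum_bound_general (q N : ℕ)
    (b : Fin N → ℕ) (hb : Monotone b) :
    (1 / ((∏ k ∈ Finset.image b Finset.univ,
        Nat.factorial (Finset.univ.filter fun j : Fin N => b j = k).card : ℕ) : ℝ)) *
      ∑ τ : Equiv.Perm (Fin N),
        Real.exp ((4 * q + 1 : ℝ) *
          ∑ j : Fin N, ((j : ℕ) + 1 : ℝ) * ((b (τ j) : ℝ) - (b j : ℝ))) ≤
      ((1 - Real.exp (-(4 * q + 1 : ℝ))) ^ (N - 1))⁻¹ := by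
  have hM : (0 : ℝ) < multiplicityFactorial b := by exact_mod_cast multiplicityFactorial_pos b
  change 1 / (multiplicityFactorial b : ℝ) * permSum (4 * q + 1) b ≤ _
  rw [one_div, inv_mul_le_iff₀ hM]
  exact permSum_le (by positivity) b hb

/-- Bound on the permutation sum: with `c = 4q+1`, `S_N(τ) = c Σ_j j (b_{τ(j)} − b_j)`
and `M(b)! = Π_k m(b,k)!` the product of factorials of occupation numbers,
`(1/M(b)!) Σ_{τ ∈ S_N} exp(S_N(τ)) ≤ (1 − e^{−c})^{−(N−1)}`. -/
theorem permutation_sum_bound (q N : ℕ) (hq : 1 ≤ q)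
    (b : Fin N → ℕ) (hb : Monotone b) :
    (1 / ((∏ k ∈ Finset.image b Finset.univ,
        Nat.factorial (Finset.univ.filter fun j : Fin N => b j = k).card : ℕ) : ℝ)) *
      ∑ τ : Equiv.Perm (Fin N),
        Real.exp ((4 * q + 1 : ℝ) *
          ∑ j : Fin N, ((j : ℕ) + 1 : ℝ) * ((b (τ j) : ℝ) - (b j : ℝ))) ≤
      ((1 - Real.exp (-(4 * q + 1 : ℝ))) ^ (N - 1))⁻¹ :=
  permutation_sum_bound_general q N b hb
end

section
/- Let q ∈ ℕ, N ∈ ℕ, and b ∈ ℕ_0^N weakly increasing with root partition λ_j = q(j−1)+b_j. The number of partitions μ with μ ⪯ λ^{(q)}_N(b) in dominance order is at most p(qN(N−1)/2 + (N−1)(b_N − b_1)), where p is the integer partition counting function. Consequently it is at most exp(π √(2/3) · (q(N−1) + b_N − b_1)) for q ≥ 1. -/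
/-!
If `μ ⪯ λ` is weakly increasing with the same total, the tail sums from the second index
give `λ₁ ≤ μ₁` and the last tail sum gives `μ_N ≤ λ_N`. So `μ - λ₁` is a weakly increasing
tuple with entries in `[0, λ_N - λ₁]` and total `Σ λ_j - N λ₁`, determined by its multiset of
values. Dropping the zeros of that multiset gives a partition of
`Σ λ_j - N λ₁ ≤ qN(N-1)/2 + (N-1)(b_N - b₁)`. Keeping them gives a multiset of size `N` in
`{0, …, K}`, `K = q(N-1) + b_N - b₁`, and stars and bars bounds their number by
`C(K + N, N) ≤ 4^K ≤ exp(π √(2/3) K)`, because `N - 1 ≤ K` when `q ≥ 1`.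
-/

open Finset

theorem Multiset.eq_of_card_eq_of_forall_ne_count_eq {α : Type*} [DecidableEq α]
    {s t : Multiset α} (a : α) (hcard : Multiset.card s = Multiset.card t)
    (hcount : ∀ x, x ≠ a → s.count x = t.count x) : s = t := by
  have hfilter : s.filter (· ≠ a) = t.filter (· ≠ a) := by
    ext x
    by_cases hx : x = a
    · simp [hx]
    · simp [hx, hcount x hx]
  have hsplit (u : Multiset α) : u = u.filter (· ≠ a) + Multiset.replicate (u.count a) a := by
    rw [← Multiset.filter_eq', ← Multiset.filter_add_not (· ≠ a) u]
    simp
  have hs := congrArg Multiset.card (hsplit s)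
  have ht := congrArg Multiset.card (hsplit t)
  simp only [Multiset.card_add, Multiset.card_replicate, hfilter] at hs ht
  rw [hsplit s, hsplit t, hfilter, show s.count a = t.count a by omega]

theorem Monotone.eq_of_map_univ_val_eq {α : Type*} [LinearOrder α] {n : ℕ} {f g : Fin n → α}
    (hf : Monotone f) (hg : Monotone g) (h : univ.val.map f = univ.val.map g) : f = g := by
  rw [Fin.univ_val_map, Fin.univ_val_map] at h
  exact List.ofFn_injective <|
    (Multiset.coe_eq_coe.mp h).eq_of_sortedLE hf.sortedLE_ofFn hg.sortedLE_ofFn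

theorem ncard_monotone_le_card_partition {n m : ℕ} {s : Set (Fin n → ℕ)}
    (hs : ∀ f ∈ s, Monotone f ∧ ∑ j, f j = m) : s.ncard ≤ Fintype.card m.Partition := by
  rw [← Nat.card_coe_set_eq, ← Nat.card_eq_fintype_card]
  refine Nat.card_le_card_of_injective
    (fun f : s => Nat.Partition.ofSums m (univ.val.map f.1) (hs f.1 f.2).2) ?_
  rintro ⟨f, hf⟩ ⟨g, hg⟩ hfg
  refine Subtype.ext <| (hs f hf).1.eq_of_map_univ_val_eq (hs g hg).1 <|
    Multiset.eq_of_card_eq_of_forall_ne_count_eq 0 (by simp) fun i hi => ?_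
  have := congrArg (fun p : m.Partition => p.parts.count i) hfg
  simpa only [Nat.Partition.count_ofSums_of_ne_zero _ hi] using this

theorem ncard_monotone_le_choose {n K : ℕ} {s : Set (Fin n → ℕ)}
    (hs : ∀ f ∈ s, Monotone f ∧ ∀ j, f j ≤ K) : s.ncard ≤ (K + n).choose n := by
  rw [← Nat.card_coe_set_eq]
  let toSym (f : s) : Sym (Fin (K + 1)) n :=
    ⟨univ.val.map fun j => ⟨f.1 j, Nat.lt_succ_of_le ((hs f.1 f.2).2 j)⟩, by simp⟩
  calc Nat.card s ≤ Nat.card (Sym (Fin (K + 1)) n) := Nat.card_le_card_of_injective toSym ?_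
    _ = (K + n).choose n := by
      rw [Nat.card_eq_fintype_card, Sym.card_sym_eq_choose, Fintype.card_fin]
      congr 1; omega
  rintro ⟨f, hf⟩ ⟨g, hg⟩ hfg
  refine Subtype.ext <| (hs f hf).1.eq_of_map_univ_val_eq (hs g hg).1 ?_
  have := congrArg (fun x : Sym (Fin (K + 1)) n => (x : Multiset (Fin (K + 1))).map Fin.val) hfg
  simpa [toSym, Multiset.map_map, Function.comp_def] using this

theorem Nat.Partition.card_le_card_of_le {m n : ℕ} (h : m ≤ n) :
    Fintype.card m.Partition ≤ Fintype.card n.Partition := by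
  refine Fintype.card_le_of_injective
    (fun p => ⟨p.parts + Multiset.replicate (n - m) 1, ?_, ?_⟩) ?_
  · intro i hi
    rcases Multiset.mem_add.mp hi with hi | hi
    · exact p.parts_pos hi
    · rw [Multiset.eq_of_mem_replicate hi]; exact one_pos
  · rw [Multiset.sum_add, p.parts_sum, Multiset.sum_replicate, smul_eq_mul, mul_one]
    omega
  · intro p p' hpp'
    exact Nat.Partition.ext (add_right_cancel (congrArg Nat.Partition.parts hpp'))

section Dominance

variable {n : ℕ} {μ lam : Fin (n + 1) → ℕ}

theorem DominatedBy.apply_zero_le (h : DominatedBy μ lam) (hsum : ∑ j, μ j = ∑ j, lam j) :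
    lam 0 ≤ μ 0 := by
  rcases n with _ | n
  · simpa using hsum.ge
  · have hIci : Ici (1 : Fin (n + 2)) = univ.erase 0 := by
      ext j
      rw [mem_Ici, mem_erase, Fin.le_iff_val_le_val, Fin.val_one, Nat.one_le_iff_ne_zero,
        Fin.val_ne_zero_iff]
      simp
    have htail := h 1
    rw [hIci] at htail
    rw [← add_sum_erase _ _ (mem_univ 0), ← add_sum_erase _ _ (mem_univ 0)] at hsum
    omega

theorem DominatedBy.apply_last_le (h : DominatedBy μ lam) :
    μ (Fin.last n) ≤ lam (Fin.last n) := by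
  simpa [← Fin.top_eq_last] using h (Fin.last n)

def dominatedSet (lam : Fin (n + 1) → ℕ) : Set (Fin (n + 1) → ℕ) :=
  {μ | Monotone μ ∧ ∑ j, μ j = ∑ j, lam j ∧ DominatedBy μ lam}

theorem apply_mem_Icc_of_mem_dominatedSet (hμ : μ ∈ dominatedSet lam) (j : Fin (n + 1)) :
    μ j ∈ Set.Icc (lam 0) (lam (Fin.last n)) := by
  obtain ⟨hmono, hsum, hdom⟩ := hμ
  exact ⟨(hdom.apply_zero_le hsum).trans (hmono (Fin.zero_le j)),
    (hmono (Fin.le_last j)).trans hdom.apply_last_le⟩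

theorem ncard_dominatedSet_eq_ncard_image :
    (dominatedSet lam).ncard = ((fun μ j => μ j - lam 0) '' dominatedSet lam).ncard := by
  refine (Set.InjOn.ncard_image fun μ hμ ν hν hμν => funext fun j => ?_).symm
  have := congrFun hμν j
  have := (apply_mem_Icc_of_mem_dominatedSet hμ j).1
  have := (apply_mem_Icc_of_mem_dominatedSet hν j).1
  omega

theorem ncard_dominatedSet_le_card_partition (lam : Fin (n + 1) → ℕ) :
    (dominatedSet lam).ncard ≤ Fintype.card (∑ j, lam j - (n + 1) * lam 0).Partition := by
  rw [ncard_dominatedSet_eq_ncard_image]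
  refine ncard_monotone_le_card_partition ?_
  rintro _ ⟨μ, hμ, rfl⟩
  refine ⟨fun i j hij => Nat.sub_le_sub_right (hμ.1 hij) _, ?_⟩
  rw [sum_tsub_distrib _ fun j _ => (apply_mem_Icc_of_mem_dominatedSet hμ j).1, hμ.2.1]
  simp

theorem ncard_dominatedSet_le_choose (lam : Fin (n + 1) → ℕ) :
    (dominatedSet lam).ncard ≤ (lam (Fin.last n) - lam 0 + (n + 1)).choose (n + 1) := by
  rw [ncard_dominatedSet_eq_ncard_image]
  refine ncard_monotone_le_choose ?_
  rintro _ ⟨μ, hμ, rfl⟩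
  exact ⟨fun i j hij => Nat.sub_le_sub_right (hμ.1 hij) _,
    fun j => Nat.sub_le_sub_right (apply_mem_Icc_of_mem_dominatedSet hμ j).2 _⟩

end Dominance

theorem sum_root_sub_le {n : ℕ} (q : ℕ) {b : Fin (n + 1) → ℕ} (hb : Monotone b) :
    ∑ j : Fin (n + 1), (q * j + b j) - (n + 1) * b 0 ≤
      q * ((n + 1) * n / 2) + n * (b (Fin.last n) - b 0) := by
  have hid : ∑ j : Fin (n + 1), (j : ℕ) = (n + 1) * n / 2 := by
    rw [Fin.sum_univ_eq_sum_range (fun j => j), sum_range_id, Nat.add_sub_cancel]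
  have htail : ∑ j : Fin n, b j.succ ≤ n * b (Fin.last n) := by
    simpa using sum_le_card_nsmul univ (fun j : Fin n => b j.succ) _
      fun j _ => hb (Fin.le_last _)
  have hmono : n * b 0 ≤ n * b (Fin.last n) := Nat.mul_le_mul_left _ (hb (Fin.zero_le _))
  have hsum : ∑ j : Fin (n + 1), (q * j + b j) =
      q * ((n + 1) * n / 2) + (b 0 + ∑ j : Fin n, b j.succ) := by
    rw [sum_add_distrib, ← mul_sum, hid, Fin.sum_univ_succ]
  have hsucc : (n + 1) * b 0 = n * b 0 + b 0 := by ring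
  rw [hsum, hsucc, Nat.mul_sub]
  omega

theorem choose_add_succ_le_four_pow {K n : ℕ} (h : n ≤ K) :
    (K + (n + 1)).choose (n + 1) ≤ 4 ^ K :=
  calc (K + (n + 1)).choose (n + 1) = (K + (n + 1)).choose K := Nat.choose_symm_add.symm
    _ ≤ (2 * K + 1).choose K := Nat.choose_le_choose K (by omega)
    _ ≤ 4 ^ K := Nat.choose_middle_le_pow K

theorem ncard_dominatedSet_root_le_four_pow {n q : ℕ} (hq : 1 ≤ q) {b : Fin (n + 1) → ℕ}
    (hb : Monotone b) :
    (dominatedSet fun j => q * j + b j).ncard ≤ 4 ^ (q * n + (b (Fin.last n) - b 0)) := by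
  have hspread : q * (Fin.last n : ℕ) + b (Fin.last n) - (q * (0 : Fin (n + 1)) + b 0) =
      q * n + (b (Fin.last n) - b 0) := by
    have := hb (Fin.zero_le (Fin.last n))
    simp only [Fin.val_last, Fin.val_zero, mul_zero, zero_add]
    omega
  refine (ncard_dominatedSet_le_choose _).trans ?_
  rw [hspread]
  exact choose_add_succ_le_four_pow ((Nat.le_mul_of_pos_left n hq).trans (Nat.le_add_right _ _))

open Real in
theorem four_le_exp_pi_mul_sqrt_two_thirds : (4 : ℝ) ≤ exp (π * √(2 / 3)) := by
  have hsqrt : (2 / 3 : ℝ) ≤ √(2 / 3) := Real.le_sqrt_of_sq_le (by norm_num)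
  have hx : 2 ≤ π * √(2 / 3) := by nlinarith [pi_gt_three]
  nlinarith [quadratic_le_exp_of_nonneg (x := π * √(2 / 3)) (by linarith)]

/-- The number of partitions dominated by the root partition `λ^{(q)}_N(b)` is at most
`p(qN(N−1)/2 + (N−1)(b_N − b_1))`, and hence at most
`exp(π √(2/3) (q(N−1) + b_N − b_1))`. -/
theorem count_dominated_partitions (q N : ℕ) (hq : 1 ≤ q) (hN : 1 ≤ N)
    (b : Fin N → ℕ) (hb : Monotone b) :
    Set.ncard {μ : Fin N → ℕ | Monotone μ ∧
        (∑ j, μ j = ∑ j : Fin N, (q * (j : ℕ) + b j)) ∧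
        DominatedBy μ (fun j => q * (j : ℕ) + b j)} ≤
      Fintype.card (Nat.Partition
        (q * (N * (N - 1) / 2) + (N - 1) * (b ⟨N - 1, by omega⟩ - b ⟨0, by omega⟩))) ∧
    (Set.ncard {μ : Fin N → ℕ | Monotone μ ∧
        (∑ j, μ j = ∑ j : Fin N, (q * (j : ℕ) + b j)) ∧
        DominatedBy μ (fun j => q * (j : ℕ) + b j)} : ℝ) ≤
      Real.exp (Real.pi * Real.sqrt (2 / 3) *
        ((q * (N - 1) : ℕ) + (b ⟨N - 1, by omega⟩ : ℝ) - (b ⟨0, by omega⟩ : ℝ))) := by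
  obtain ⟨n, rfl⟩ : ∃ n, N = n + 1 := ⟨N - 1, by omega⟩
  change (dominatedSet fun j => q * j + b j).ncard ≤
      Fintype.card (q * ((n + 1) * n / 2) + n * (b (Fin.last n) - b 0)).Partition ∧
    ((dominatedSet fun j => q * j + b j).ncard : ℝ) ≤
      Real.exp (Real.pi * √(2 / 3) * ((q * n : ℕ) + (b (Fin.last n) : ℝ) - (b 0 : ℝ)))
  refine ⟨(ncard_dominatedSet_le_card_partition _).trans
    (Nat.Partition.card_le_card_of_le (by simpa using sum_root_sub_le q hb)), ?_⟩
  have hK : ((q * n : ℕ) : ℝ) + (b (Fin.last n) : ℝ) - (b 0 : ℝ) =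
      ((q * n + (b (Fin.last n) - b 0) : ℕ) : ℝ) := by
    push_cast [hb (Fin.zero_le (Fin.last n))]
    ring
  calc ((dominatedSet fun j => q * j + b j).ncard : ℝ)
      ≤ 4 ^ (q * n + (b (Fin.last n) - b 0)) := by
        exact_mod_cast ncard_dominatedSet_root_le_four_pow hq hb
    _ ≤ Real.exp (Real.pi * √(2 / 3)) ^ (q * n + (b (Fin.last n) - b 0)) := by
        gcongr
        exact four_le_exp_pi_mul_sqrt_two_thirds
    _ = _ := by rw [hK, ← Real.exp_nat_mul, mul_comm]
end
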